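/- Let A be the Liu-Schulz algebra: the k-algebra generated by x₀, x₁, x₂ subject to xᵢ² = 0 and x_{i+1}x_i + q·xᵢx_{i+1} = 0 for i = 0,1,2 (indices mod 3), where q ∈ k is nonzero and not a root of unity. Then A is an 8-dimensional local symmetric algebra with k-basis {1, x₀, x₁, x₂, x₀x₁, x₁x₂, x₀x₂, x₀x₁x₂}. -/

import Mathlib

/-
The relations say that the Liu–Schulz algebra is the skew exterior algebra on three generators
with commutation scalars `-q, -q, -q⁻¹`. That algebra is realised concretely on `k⁸` by explicit
structure constants (associative for any scalars), and `xᵢ ↦ eᵢ₊₁` respects the relations. In the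
Liu–Schulz algebra the eight monomials span, since right multiplication by a generator sends each
monomial to a multiple of a monomial; their images are the standard basis, so they form a basis
and the algebra is isomorphic to the model. There a product of four elements with vanishing
constant term is zero, so the augmentation has nilpotent kernel and the algebra is local; the
coefficient of `x₀x₁x₂` is a nondegenerate trace, symmetric because `(-q⁻¹)(-q) = 1`.
-/

universe u

/-- The defining relations of the Liu-Schulz algebra: `xᵢ² = 0` and
`x_{i+1} xᵢ + q · xᵢ x_{i+1} = 0` for `i = 0, 1, 2` (indices mod 3). -/
inductive LiuSchulzRel (k : Type u) [Field k] (q : k) :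
    FreeAlgebra k (Fin 3) → FreeAlgebra k (Fin 3) → Prop
  | sq (i : Fin 3) : LiuSchulzRel k q (FreeAlgebra.ι k i * FreeAlgebra.ι k i) 0
  | comm (i : Fin 3) : LiuSchulzRel k q
      (FreeAlgebra.ι k (i + 1) * FreeAlgebra.ι k i
        + q • (FreeAlgebra.ι k i * FreeAlgebra.ι k (i + 1))) 0

/-- The Liu-Schulz algebra over `k` with parameter `q`. -/
abbrev LiuSchulzAlgebra (k : Type u) [Field k] (q : k) : Type u :=
  RingQuot (LiuSchulzRel k q)

/-- The images of the generators `x₀, x₁, x₂` in the Liu-Schulz algebra. -/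
noncomputable def LiuSchulzX (k : Type u) [Field k] (q : k) (i : Fin 3) :
    LiuSchulzAlgebra k q :=
  RingQuot.mkAlgHom k (LiuSchulzRel k q) (FreeAlgebra.ι k i)

/-- For finite-dimensional `A` this is equivalent to `A ≅ Hom_k(A, k)` as `A`-`A`-bimodules. -/
def IsSymmetricFrobeniusAlgebra (k A : Type*) [Field k] [Ring A] [Algebra k A] : Prop :=
  ∃ B : LinearMap.BilinForm k A,
    (∀ a b c : A, B (a * b) c = B a (b * c)) ∧
    (∀ a b : A, B a b = B b a) ∧
    (∀ a : A, (∀ b : A, B a b = 0) → a = 0)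

namespace IsSymmetricFrobeniusAlgebra

variable {k A A' : Type*} [Field k] [Ring A] [Algebra k A] [Ring A'] [Algebra k A']

theorem of_linearForm (τ : A →ₗ[k] k) (hsymm : ∀ a b, τ (a * b) = τ (b * a))
    (hnondeg : ∀ a, (∀ b, τ (a * b) = 0) → a = 0) : IsSymmetricFrobeniusAlgebra k A :=
  ⟨(LinearMap.mul k A).compr₂ τ, fun a b c => by simp [mul_assoc], hsymm, hnondeg⟩

theorem of_algEquiv (e : A ≃ₐ[k] A') (h : IsSymmetricFrobeniusAlgebra k A') :
    IsSymmetricFrobeniusAlgebra k A := by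
  obtain ⟨B, hassoc, hsymm, hnondeg⟩ := h
  refine ⟨B.compl₁₂ e.toLinearMap e.toLinearMap, fun a b c => ?_, fun a b => hsymm _ _,
    fun a ha => e.injective ?_⟩
  · simpa using hassoc (e a) (e b) (e c)
  · rw [map_zero]
    exact hnondeg _ fun v => by simpa using ha (e.symm v)

end IsSymmetricFrobeniusAlgebra

theorem IsLocalRing.of_algHom_of_isNilpotent {k A : Type*} [Field k] [Ring A] [Algebra k A]
    (ε : A →ₐ[k] k) (hε : ∀ a, ε a = 0 → IsNilpotent a) : IsLocalRing A := by
  have hunit : ∀ a, ε a ≠ 0 → IsUnit a := fun a ha => by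
    have hnil : IsNilpotent (a - algebraMap k A (ε a)) := hε _ (by simp)
    simpa using hnil.isUnit_add_left_of_commute ((Ne.isUnit ha).map (algebraMap k A))
      (Algebra.commutes _ _).symm
  have : Nontrivial A := ε.toRingHom.domain_nontrivial
  refine of_isUnit_or_isUnit_one_sub_self fun a => ?_
  by_cases ha : ε a = 0
  · exact .inr (hunit _ (by simp [ha]))
  · exact .inl (hunit a ha)

theorem Submodule.span_range_eq_top_of_mul_mem {R A ι : Type*} [CommSemiring R] [Semiring A]
    [Algebra R A] {s : Set A} (hs : Algebra.adjoin R s = ⊤) {v : ι → A}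
    (h1 : 1 ∈ span R (Set.range v)) (hmul : ∀ i, ∀ x ∈ s, v i * x ∈ span R (Set.range v)) :
    span R (Set.range v) = ⊤ := by
  set p := span R (Set.range v)
  have hstable : ∀ x ∈ s, ∀ m ∈ p, m * x ∈ p := fun x hx m hm =>
    (span_le (p := p.comap (LinearMap.mulRight R x)) |>.2
      (by rintro _ ⟨i, rfl⟩; exact hmul i x hx)) hm
  have key : ∀ a ∈ Algebra.adjoin R s, ∀ m ∈ p, m * a ∈ p := fun a ha => by
    induction ha using Algebra.adjoin_induction with
    | mem x hx => exact hstable x hx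
    | algebraMap r =>
      exact fun m hm => by rw [← Algebra.commutes, ← Algebra.smul_def]; exact p.smul_mem r hm
    | add x y _ _ hx hy => exact fun m hm => by rw [mul_add]; exact p.add_mem (hx m hm) (hy m hm)
    | mul x y _ _ hx hy => exact fun m hm => by rw [← mul_assoc]; exact hy _ (hx m hm)
  exact eq_top_iff.2 fun a _ => by simpa using key a (hs ▸ Algebra.mem_top) 1 h1

/-- The algebra generated by `x₀, x₁, x₂` with `xᵢ² = 0`, `x₁x₀ = a x₀x₁`, `x₂x₁ = b x₁x₂`,
`x₂x₀ = c x₀x₂`, in coordinates on the basis `1, x₀, x₁, x₂, x₀x₁, x₁x₂, x₀x₂, x₀x₁x₂`. -/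
def SkewExterior (k : Type u) [Field k] (_a _b _c : k) : Type u := Fin 8 → k

namespace SkewExterior

variable {k : Type u} [Field k] {a b c : k}

instance : AddCommGroup (SkewExterior k a b c) := Pi.addCommGroup

@[ext] lemma ext {u v : SkewExterior k a b c} (h : ∀ i, u i = v i) : u = v := funext h

def mulTable (a b c : k) (u v : Fin 8 → k) : Fin 8 → k :=
  ![u 0 * v 0, u 0 * v 1 + u 1 * v 0, u 0 * v 2 + u 2 * v 0, u 0 * v 3 + u 3 * v 0,
    u 0 * v 4 + u 4 * v 0 + u 1 * v 2 + a * u 2 * v 1,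
    u 0 * v 5 + u 5 * v 0 + u 2 * v 3 + b * u 3 * v 2,
    u 0 * v 6 + u 6 * v 0 + u 1 * v 3 + c * u 3 * v 1,
    u 0 * v 7 + u 7 * v 0 + u 1 * v 5 + c * a * u 5 * v 1 + a * u 2 * v 6 + b * u 6 * v 2
      + u 4 * v 3 + c * b * u 3 * v 4]

instance : Mul (SkewExterior k a b c) := ⟨mulTable a b c⟩

def single (i : Fin 8) (r : k) : SkewExterior k a b c := Pi.single i r

lemma single_apply (i j : Fin 8) (r : k) :
    (single i r : SkewExterior k a b c) j = if j = i then r else 0 := Pi.single_apply i r j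

instance : One (SkewExterior k a b c) := ⟨single 0 1⟩

lemma mul_apply (u v : SkewExterior k a b c) (i : Fin 8) : (u * v) i = mulTable a b c u v i := rfl
lemma one_apply (i : Fin 8) : (1 : SkewExterior k a b c) i = if i = 0 then 1 else 0 :=
  single_apply 0 i 1
lemma add_apply (u v : SkewExterior k a b c) (i : Fin 8) : (u + v) i = u i + v i := rfl
lemma zero_apply (i : Fin 8) : (0 : SkewExterior k a b c) i = 0 := rfl

instance : Ring (SkewExterior k a b c) where
  left_distrib u v w := by ext i; fin_cases i <;> simp [mul_apply, mulTable, add_apply] <;> ring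
  right_distrib u v w := by ext i; fin_cases i <;> simp [mul_apply, mulTable, add_apply] <;> ring
  zero_mul u := by ext i; fin_cases i <;> simp [mul_apply, mulTable, zero_apply]
  mul_zero u := by ext i; fin_cases i <;> simp [mul_apply, mulTable, zero_apply]
  mul_assoc u v w := by ext i; fin_cases i <;> simp [mul_apply, mulTable] <;> ring
  one_mul u := by ext i; fin_cases i <;> simp [mul_apply, mulTable, one_apply]
  mul_one u := by ext i; fin_cases i <;> simp [mul_apply, mulTable, one_apply]

instance : Algebra k (SkewExterior k a b c) where
  smul r u i := r * u i
  algebraMap :=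
    { toFun := single 0
      map_one' := rfl
      map_mul' r s := by ext i; fin_cases i <;> simp [single_apply, mul_apply, mulTable]
      map_zero' := by ext i; simp [single_apply, zero_apply]
      map_add' r s := by ext i; fin_cases i <;> simp [single_apply, add_apply] }
  commutes' r u := by ext i; fin_cases i <;> simp [single_apply, mul_apply, mulTable] <;> ring
  smul_def' r u := by ext i; fin_cases i <;> simp [single_apply, mul_apply, mulTable] <;> rfl

lemma smul_apply (r : k) (u : SkewExterior k a b c) (i : Fin 8) : (r • u) i = r * u i := rfl

lemma algebraMap_eq_single (r : k) : algebraMap k (SkewExterior k a b c) r = single 0 r := rfl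

def equivFun : SkewExterior k a b c ≃ₗ[k] (Fin 8 → k) :=
  { Equiv.refl _ with map_add' := fun _ _ => rfl, map_smul' := fun _ _ => rfl }

noncomputable def basisFun : Module.Basis (Fin 8) k (SkewExterior k a b c) :=
  .ofEquivFun equivFun

lemma basisFun_apply (i : Fin 8) : (basisFun i : SkewExterior k a b c) = single i 1 := by
  rw [basisFun, Module.Basis.coe_ofEquivFun]
  rfl

def augmentation : SkewExterior k a b c →ₐ[k] k where
  toFun u := u 0
  map_one' := rfl
  map_mul' _ _ := rfl
  map_zero' := rfl
  map_add' _ _ := rfl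
  commutes' r := by simp [algebraMap_eq_single, single_apply]

lemma pow_four_eq_zero {u : SkewExterior k a b c} (hu : u 0 = 0) : u ^ 4 = 0 := by
  ext i; fin_cases i <;> simp [pow_succ, mul_apply, mulTable, hu, zero_apply]

def topCoeff : SkewExterior k a b c →ₗ[k] k := LinearMap.proj 7

lemma topCoeff_apply (u : SkewExterior k a b c) : topCoeff u = u 7 := rfl

theorem isSymmetricFrobeniusAlgebra (hca : c * a = 1) :
    IsSymmetricFrobeniusAlgebra k (SkewExterior k a a c) := by
  have ha : a ≠ 0 := right_ne_zero_of_mul_eq_one hca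
  have hc : c ≠ 0 := left_ne_zero_of_mul_eq_one hca
  refine .of_linearForm topCoeff (fun u v => ?_) (fun u hu => ?_)
  · simp only [topCoeff_apply, mul_apply, mulTable, Matrix.cons_val]
    linear_combination (u 5 * v 1 - u 1 * v 5 + u 3 * v 4 - u 4 * v 3) * hca
  · have h := fun i => hu (single i 1)
    simp [Fin.forall_fin_succ, single_apply, topCoeff_apply, mul_apply, mulTable, ha, hc] at h
    ext i; fin_cases i <;> simp [h, zero_apply]

end SkewExterior

namespace LiuSchulzAlgebra

variable {k : Type u} [Field k] {q : k}

local notation "x" => LiuSchulzX k q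

lemma x_mul_self (i : Fin 3) : x i * x i = 0 := by
  simpa [LiuSchulzX] using RingQuot.mkAlgHom_rel k (LiuSchulzRel.sq (q := q) i)

lemma x_mul_self_mul (i : Fin 3) (z : LiuSchulzAlgebra k q) : x i * (x i * z) = 0 := by
  rw [← mul_assoc, x_mul_self, zero_mul]

lemma x_succ_mul (i : Fin 3) : x (i + 1) * x i = (-q) • (x i * x (i + 1)) := by
  have h : x (i + 1) * x i + q • (x i * x (i + 1)) = 0 := by
    simpa [LiuSchulzX] using RingQuot.mkAlgHom_rel k (LiuSchulzRel.comm (q := q) i)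
  exact (eq_neg_of_add_eq_zero_left h).trans (neg_smul q _).symm

lemma x_one_mul_x_zero : x 1 * x 0 = (-q) • (x 0 * x 1) := x_succ_mul 0

lemma x_two_mul_x_one : x 2 * x 1 = (-q) • (x 1 * x 2) := x_succ_mul 1

lemma x_one_mul_x_zero_mul (z : LiuSchulzAlgebra k q) :
    x 1 * (x 0 * z) = (-q) • (x 0 * (x 1 * z)) := by
  rw [← mul_assoc, x_one_mul_x_zero, smul_mul_assoc, mul_assoc]

lemma x_two_mul_x_zero (hq : q ≠ 0) : x 2 * x 0 = (-q⁻¹) • (x 0 * x 2) := by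
  rw [show x 0 * x 2 = (-q) • (x 2 * x 0) from x_succ_mul 2, smul_smul]
  simp [hq]

lemma adjoin_range_x : Algebra.adjoin k (Set.range x) = ⊤ := by
  rw [show Set.range x = RingQuot.mkAlgHom k (LiuSchulzRel k q) '' Set.range (FreeAlgebra.ι k)
    by rw [← Set.range_comp]; rfl, ← AlgHom.map_adjoin, FreeAlgebra.adjoin_range_ι,
    Algebra.map_top, AlgHom.range_eq_top]
  exact RingQuot.mkAlgHom_surjective k _

noncomputable def monomial : Fin 8 → LiuSchulzAlgebra k q :=
  ![1, x 0, x 1, x 2, x 0 * x 1, x 1 * x 2, x 0 * x 2, x 0 * x 1 * x 2]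

lemma monomial_mul_x_mem (hq : q ≠ 0) {p : Submodule k (LiuSchulzAlgebra k q)}
    (hp : ∀ i, monomial i ∈ p) (i : Fin 8) (j : Fin 3) : monomial i * x j ∈ p := by
  simp only [Fin.forall_fin_succ, monomial, mul_assoc, Matrix.cons_val_zero, Matrix.cons_val_succ,
    Matrix.cons_val_fin_one, forall_const] at hp
  fin_cases i <;> fin_cases j <;>
    simp [monomial, mul_assoc, x_mul_self, x_mul_self_mul, x_one_mul_x_zero, x_two_mul_x_one,
      x_one_mul_x_zero_mul, x_two_mul_x_zero hq, smul_smul, Submodule.smul_mem, hp]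

lemma span_monomial (hq : q ≠ 0) :
    Submodule.span k (Set.range (monomial (k := k) (q := q))) = ⊤ :=
  Submodule.span_range_eq_top_of_mul_mem adjoin_range_x (Submodule.subset_span ⟨0, rfl⟩)
    (by
      rintro i _ ⟨j, rfl⟩
      exact monomial_mul_x_mem hq (fun l => Submodule.subset_span (Set.mem_range_self l)) i j)

noncomputable def toSkewExterior (hq : q ≠ 0) :
    LiuSchulzAlgebra k q →ₐ[k] SkewExterior k (-q) (-q) (-q⁻¹) :=
  RingQuot.liftAlgHom k ⟨FreeAlgebra.lift k fun j => .single (![1, 2, 3] j) 1, fun _ _ h => by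
    cases h with
    | sq i =>
      fin_cases i <;> ext l <;> fin_cases l <;>
        simp [SkewExterior.single_apply, SkewExterior.mul_apply, SkewExterior.mulTable,
          SkewExterior.zero_apply]
    | comm i =>
      fin_cases i <;> ext l <;> fin_cases l <;>
        simp [SkewExterior.single_apply, SkewExterior.mul_apply, SkewExterior.mulTable,
          SkewExterior.zero_apply, SkewExterior.add_apply, SkewExterior.smul_apply, hq]⟩

lemma toSkewExterior_x (hq : q ≠ 0) (j : Fin 3) :
    toSkewExterior hq (x j) = .single (![1, 2, 3] j) 1 := by
  simp [toSkewExterior, LiuSchulzX]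

lemma toSkewExterior_monomial (hq : q ≠ 0) (i : Fin 8) :
    toSkewExterior hq (monomial i) = .single i 1 := by
  fin_cases i <;> ext l <;> fin_cases l <;>
    simp [monomial, toSkewExterior_x, SkewExterior.single_apply, SkewExterior.mul_apply,
      SkewExterior.mulTable, SkewExterior.one_apply]

lemma linearIndependent_monomial (hq : q ≠ 0) :
    LinearIndependent k (monomial (k := k) (q := q)) :=
  .of_comp (toSkewExterior hq).toLinearMap <| by
    convert SkewExterior.basisFun.linearIndependent
    funext i
    simp [toSkewExterior_monomial, SkewExterior.basisFun_apply]

noncomputable def monomialBasis (hq : q ≠ 0) : Module.Basis (Fin 8) k (LiuSchulzAlgebra k q) :=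
  .mk (linearIndependent_monomial hq) (span_monomial hq).ge

lemma monomialBasis_apply (hq : q ≠ 0) (i : Fin 8) : monomialBasis hq i = monomial i :=
  Module.Basis.mk_apply ..

lemma toSkewExterior_bijective (hq : q ≠ 0) : Function.Bijective (toSkewExterior hq) := by
  have h : (toSkewExterior hq).toLinearMap =
      ((monomialBasis hq).equiv SkewExterior.basisFun (Equiv.refl _)).toLinearMap :=
    (monomialBasis hq).ext fun i => by
      rw [AlgHom.toLinearMap_apply, LinearEquiv.coe_coe, Module.Basis.equiv_apply,
        Equiv.refl_apply, monomialBasis_apply, toSkewExterior_monomial,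
        SkewExterior.basisFun_apply]
  rw [← AlgHom.coe_toLinearMap, h]
  exact LinearEquiv.bijective _

noncomputable def equivSkewExterior (hq : q ≠ 0) :
    LiuSchulzAlgebra k q ≃ₐ[k] SkewExterior k (-q) (-q) (-q⁻¹) :=
  .ofBijective _ (toSkewExterior_bijective hq)

theorem isLocalRing (hq : q ≠ 0) : IsLocalRing (LiuSchulzAlgebra k q) := by
  let e := equivSkewExterior hq
  refine .of_algHom_of_isNilpotent (SkewExterior.augmentation.comp e.toAlgHom) fun a ha => ?_
  have hnil : IsNilpotent (e a) := ⟨4, SkewExterior.pow_four_eq_zero ha⟩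
  simpa using hnil.map e.symm

theorem isSymmetricFrobeniusAlgebra (hq : q ≠ 0) :
    IsSymmetricFrobeniusAlgebra k (LiuSchulzAlgebra k q) :=
  .of_algEquiv (equivSkewExterior hq)
    (SkewExterior.isSymmetricFrobeniusAlgebra (by rw [neg_mul_neg, inv_mul_cancel₀ hq]))

end LiuSchulzAlgebra

theorem liuSchulz_8dim_local_symmetric_general (k : Type u) [Field k] (q : k) (hq : q ≠ 0) :
    letI A := LiuSchulzAlgebra k q
    letI x := LiuSchulzX k q
    Module.finrank k A = 8 ∧
    (∃ b : Module.Basis (Fin 8) k A,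
      b 0 = 1 ∧ b 1 = x 0 ∧ b 2 = x 1 ∧ b 3 = x 2 ∧
      b 4 = x 0 * x 1 ∧ b 5 = x 1 * x 2 ∧ b 6 = x 0 * x 2 ∧
      b 7 = x 0 * x 1 * x 2) ∧
    IsLocalRing A ∧
    -- `A` is symmetric: there is a nondegenerate symmetric associative bilinear form.
    (∃ B : LinearMap.BilinForm k A,
      (∀ a b c : A, B (a * b) c = B a (b * c)) ∧
      (∀ a b : A, B a b = B b a) ∧
      (∀ a : A, (∀ b : A, B a b = 0) → a = 0)) := by
  let b := LiuSchulzAlgebra.monomialBasis hq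
  have hb := LiuSchulzAlgebra.monomialBasis_apply hq
  exact ⟨(Module.finrank_eq_card_basis b).trans (Fintype.card_fin 8),
    ⟨b, hb 0, hb 1, hb 2, hb 3, hb 4, hb 5, hb 6, hb 7⟩,
    LiuSchulzAlgebra.isLocalRing hq, LiuSchulzAlgebra.isSymmetricFrobeniusAlgebra hq⟩

/-- The Liu-Schulz algebra (with `q ≠ 0` not a root of unity) is an 8-dimensional
local algebra, symmetric (it carries a nondegenerate symmetric associative bilinear form),
with `k`-basis `{1, x₀, x₁, x₂, x₀x₁, x₁x₂, x₀x₂, x₀x₁x₂}`. -/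
theorem liuSchulz_8dim_local_symmetric (k : Type u) [Field k] (q : k) (hq : q ≠ 0)
    (hq' : ∀ m : ℕ, 0 < m → q ^ m ≠ 1) :
    letI A := LiuSchulzAlgebra k q
    letI x := LiuSchulzX k q
    Module.finrank k A = 8 ∧
    (∃ b : Module.Basis (Fin 8) k A,
      b 0 = 1 ∧ b 1 = x 0 ∧ b 2 = x 1 ∧ b 3 = x 2 ∧
      b 4 = x 0 * x 1 ∧ b 5 = x 1 * x 2 ∧ b 6 = x 0 * x 2 ∧
      b 7 = x 0 * x 1 * x 2) ∧
    IsLocalRing A ∧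
    -- `A` is symmetric: there is a nondegenerate symmetric associative bilinear form.
    (∃ B : LinearMap.BilinForm k A,
      (∀ a b c : A, B (a * b) c = B a (b * c)) ∧
      (∀ a b : A, B a b = B b a) ∧
      (∀ a : A, (∀ b : A, B a b = 0) → a = 0)) :=
  liuSchulz_8dim_local_symmetric_general k q hq
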